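/- arXiv:2407.06528 — 2 statements merged into one kernel-verified Lean document; each statement's English description precedes it below -/
import Mathlib

section
/- Let T ≥ 1 be an integer, λ > 0 and α > 0 with 2αλT < 1. Then the mean-field operator 𝒯 satisfies ‖𝒯g¹ − 𝒯g²‖_∞ ≤ 2αλT · ‖g¹ − g²‖_∞ for all g¹, g² ∈ ℝ^T (sup norm on ℝ^T), i.e. 𝒯 is a contraction, and consequently there exists a unique g* ∈ [0,1]^T with 𝒯(g*) = g*. -/
open MeasureTheory Matrix

/-- State–action value functions of the mean-field sensing problem, indexed by
time-to-go: `Qrev T lam A Γ μ g m e a = Q^g_{T-1-m}(e, a)`, defined by the backward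
recursion `Q^g_k(e,a) = λ g_k a + ∫ [ e'ᵀ Γ_{k+1} e' + min_a' Q^g_{k+1}(e', a') ] dμ(w)`
where `e' = (1-a) A e + w` and the terminal value `V^g_T ≡ 0`. -/
noncomputable def Qrev {n : ℕ} (T : ℕ) (lam : ℝ) (A : Matrix (Fin n) (Fin n) ℝ)
    (Γ : ℕ → Matrix (Fin n) (Fin n) ℝ) (μ : Measure (Fin n → ℝ)) (g : ℕ → ℝ) :
    ℕ → (Fin n → ℝ) → ℝ → ℝ
  | 0, e, a =>
      lam * g (T - 1) * a +
        ∫ w, ((1 - a) • (A *ᵥ e) + w) ⬝ᵥ ((Γ T) *ᵥ ((1 - a) • (A *ᵥ e) + w)) ∂μ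
  | m + 1, e, a =>
      lam * g (T - 1 - (m + 1)) * a +
        ∫ w,
          (((1 - a) • (A *ᵥ e) + w) ⬝ᵥ ((Γ (T - (m + 1))) *ᵥ ((1 - a) • (A *ᵥ e) + w)) +
            min (Qrev T lam A Γ μ g m ((1 - a) • (A *ᵥ e) + w) 0)
              (Qrev T lam A Γ μ g m ((1 - a) • (A *ᵥ e) + w) 1)) ∂μ

/-- `Qval T lam A Γ μ g k e a = Q^g_k(e,a)` for `0 ≤ k ≤ T-1`. -/
noncomputable def Qval {n : ℕ} (T : ℕ) (lam : ℝ) (A : Matrix (Fin n) (Fin n) ℝ)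
    (Γ : ℕ → Matrix (Fin n) (Fin n) ℝ) (μ : Measure (Fin n → ℝ)) (g : ℕ → ℝ)
    (k : ℕ) (e : Fin n → ℝ) (a : ℝ) : ℝ :=
  Qrev T lam A Γ μ g (T - 1 - k) e a

/-- Value of information `VoI^g_k(e) = Q^g_k(e,0) - Q^g_k(e,1)`. -/
noncomputable def VoI {n : ℕ} (T : ℕ) (lam : ℝ) (A : Matrix (Fin n) (Fin n) ℝ)
    (Γ : ℕ → Matrix (Fin n) (Fin n) ℝ) (μ : Measure (Fin n → ℝ)) (g : ℕ → ℝ)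
    (k : ℕ) (e : Fin n → ℝ) : ℝ :=
  Qval T lam A Γ μ g k e 0 - Qval T lam A Γ μ g k e 1

/-- Extension of a finite sequence `g ∈ ℝ^T` to `ℕ → ℝ` (by zero). -/
def extendSeq (T : ℕ) (g : Fin T → ℝ) : ℕ → ℝ :=
  fun j => if h : j < T then g ⟨j, h⟩ else 0

/-- The Boltzmann (logistic) function `σ_α(x) = 1/(1 + exp(-α x))`. -/
noncomputable def boltz (α x : ℝ) : ℝ := (1 + Real.exp (-α * x))⁻¹

/-- The mean-field operator `(𝒯 g)_k = ∫ σ_α(VoI^g_k(e)) dν_k(e)`. -/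
noncomputable def Tmf {n : ℕ} (T : ℕ) (lam α : ℝ) (A : Matrix (Fin n) (Fin n) ℝ)
    (Γ : ℕ → Matrix (Fin n) (Fin n) ℝ) (μ : Measure (Fin n → ℝ))
    (ν : Fin T → Measure (Fin n → ℝ)) (g : Fin T → ℝ) : Fin T → ℝ :=
  fun k => ∫ e, boltz α (VoI T lam A Γ μ (extendSeq T g) (k : ℕ) e) ∂(ν k)

/-!
Changing the mean-field sequence `g` only changes the running cost `λ g_k a`. By backward
induction, using that `min` is 1-Lipschitz and that `μ` is a probability measure, `Q^g_k` moves by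
at most `(T - k) λ ‖g¹ - g²‖_∞`, hence `VoI^g_k` by at most `2 λ T ‖g¹ - g²‖_∞`. As `σ_α` is
`α`-Lipschitz, `𝒯` is a `2αλT`-contraction of the complete space `ℝ^T`, and Banach's fixed point
theorem gives the unique fixed point; it lies in `[0,1]^T` because `𝒯` takes values there.
-/

lemma Real.lipschitzWith_sigmoid : LipschitzWith 1 Real.sigmoid := by
  refine lipschitzWith_of_nnnorm_deriv_le differentiable_sigmoid fun x => ?_
  rw [Real.deriv_sigmoid, ← NNReal.coe_le_coe, coe_nnnorm, Real.norm_eq_abs, NNReal.coe_one,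
    abs_le]
  constructor <;> nlinarith [Real.sigmoid_nonneg x, Real.sigmoid_le_one x]

lemma boltz_eq_sigmoid (α x : ℝ) : boltz α x = Real.sigmoid (α * x) := by
  rw [boltz, Real.sigmoid_def, neg_mul]

lemma abs_boltz_sub_le {α : ℝ} (hα : 0 ≤ α) (x y : ℝ) :
    |boltz α x - boltz α y| ≤ α * |x - y| := by
  have h := Real.lipschitzWith_sigmoid.dist_le_mul (α * x) (α * y)
  rwa [Real.dist_eq, Real.dist_eq, NNReal.coe_one, one_mul, ← mul_sub, abs_mul, abs_of_nonneg hα,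
    ← boltz_eq_sigmoid, ← boltz_eq_sigmoid] at h

@[fun_prop]
lemma continuous_boltz (α : ℝ) : Continuous (boltz α) :=
  (continuous_sigmoid.comp (continuous_const_mul α)).congr fun x => (boltz_eq_sigmoid α x).symm

lemma integral_mem_Icc_zero_one {Ω : Type*} [MeasurableSpace Ω] {μ : Measure Ω}
    [IsProbabilityMeasure μ] {f : Ω → ℝ} (hf : ∀ x, f x ∈ Set.Icc 0 1) :
    ∫ x, f x ∂μ ∈ Set.Icc 0 1 := by
  refine ⟨integral_nonneg fun x => (hf x).1, (le_abs_self _).trans ?_⟩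
  have h := norm_integral_le_of_norm_le_const (μ := μ) (f := f) (C := 1) <| ae_of_all _ fun x => by
    rw [Real.norm_eq_abs, abs_of_nonneg (hf x).1]
    exact (hf x).2
  rwa [probReal_univ, mul_one, Real.norm_eq_abs] at h

lemma abs_integral_sub_integral_le {Ω : Type*} [MeasurableSpace Ω] {μ : Measure Ω}
    [IsProbabilityMeasure μ] {f g : Ω → ℝ} (hf : AEStronglyMeasurable f μ)
    (hg : AEStronglyMeasurable g μ) {c : ℝ} (hc : 0 ≤ c) (hfg : ∀ᵐ x ∂μ, |f x - g x| ≤ c) :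
    |∫ x, f x ∂μ - ∫ x, g x ∂μ| ≤ c := by
  have hd : Integrable (f - g) μ := .of_bound (hf.sub hg) c hfg
  by_cases hfi : Integrable f μ
  · have hgi : Integrable g μ := by simpa using hfi.sub hd
    rw [← integral_sub hfi hgi]
    have h := norm_integral_le_of_norm_le_const (μ := μ) (f := fun x => f x - g x)
      (by simpa only [Real.norm_eq_abs] using hfg)
    rwa [probReal_univ, mul_one, Real.norm_eq_abs] at h
  · -- a bounded perturbation preserves non-integrability, so both integrals vanish
    have hgi : ¬ Integrable g μ := fun hgi => hfi (by simpa using hgi.add hd)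
    simpa [integral_undef hfi, integral_undef hgi] using hc

lemma measurable_integral_comp_add {E F : Type*} [MeasurableSpace E] [MeasurableSpace F] [Add F]
    [MeasurableAdd₂ F] {μ : Measure F} [SFinite μ] {φ : F → ℝ} (hφ : Measurable φ) {L : E → F}
    (hL : Measurable L) : Measurable fun e => ∫ w, φ (L e + w) ∂μ :=
  (hφ.comp ((hL.comp measurable_fst).add measurable_snd)).stronglyMeasurable
    |>.integral_prod_right'.measurable

lemma abs_mul_mul_sub_mul_mul_le {lam : ℝ} (hlam : 0 ≤ lam) {x y c a : ℝ} (hxy : |x - y| ≤ c)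
    (ha : |a| ≤ 1) : |lam * x * a - lam * y * a| ≤ lam * c := by
  rw [← sub_mul, ← mul_sub, abs_mul, abs_mul, abs_of_nonneg hlam]
  simpa using mul_le_mul (mul_le_mul_of_nonneg_left hxy hlam) ha (abs_nonneg _)
    (mul_nonneg hlam ((abs_nonneg _).trans hxy))

section ValueFunctions

variable {n T : ℕ} {lam : ℝ} {A : Matrix (Fin n) (Fin n) ℝ} {Γ : ℕ → Matrix (Fin n) (Fin n) ℝ}
  {μ : Measure (Fin n → ℝ)}

@[fun_prop]
lemma measurable_Qrev [SFinite μ] (g : ℕ → ℝ) (m : ℕ) (a : ℝ) :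
    Measurable fun e => Qrev T lam A Γ μ g m e a := by
  induction m generalizing a with
  | zero =>
    exact measurable_const.add
      (measurable_integral_comp_add (φ := fun v => v ⬝ᵥ (Γ T *ᵥ v)) (by fun_prop) (by fun_prop))
  | succ m ih =>
    exact measurable_const.add (measurable_integral_comp_add
      (φ := fun v => v ⬝ᵥ (Γ (T - (m + 1)) *ᵥ v) +
        min (Qrev T lam A Γ μ g m v 0) (Qrev T lam A Γ μ g m v 1))
      (by fun_prop) (by fun_prop))

@[fun_prop]
lemma measurable_VoI [SFinite μ] (g : ℕ → ℝ) (k : ℕ) :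
    Measurable fun e => VoI T lam A Γ μ g k e := by
  unfold VoI Qval
  fun_prop

lemma abs_Qrev_sub_le [IsProbabilityMeasure μ] (hlam : 0 ≤ lam) {g₁ g₂ : ℕ → ℝ} {c : ℝ}
    (hg : ∀ j, |g₁ j - g₂ j| ≤ c) (m : ℕ) (e : Fin n → ℝ) {a : ℝ} (ha : |a| ≤ 1) :
    |Qrev T lam A Γ μ g₁ m e a - Qrev T lam A Γ μ g₂ m e a| ≤ (m + 1) * (lam * c) := by
  have hc : 0 ≤ c := (abs_nonneg _).trans (hg 0)
  induction m generalizing e a with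
  | zero =>
    simp only [Qrev, add_sub_add_right_eq_sub]
    simpa using abs_mul_mul_sub_mul_mul_le hlam (hg _) ha
  | succ m ih =>
    simp only [Qrev]
    rw [add_sub_add_comm, show ((m + 1 : ℕ) : ℝ) + 1 = 1 + (m + 1) by push_cast; ring, add_mul,
      one_mul]
    refine (abs_add_le _ _).trans (add_le_add (abs_mul_mul_sub_mul_mul_le hlam (hg _) ha) ?_)
    refine abs_integral_sub_integral_le (by fun_prop) (by fun_prop)
      (by positivity) (ae_of_all _ fun w => ?_)
    rw [add_sub_add_left_eq_sub]
    exact (abs_min_sub_min_le_max _ _ _ _).trans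
      (max_le (ih _ (a := 0) (by norm_num)) (ih _ (a := 1) (by norm_num)))

lemma abs_VoI_sub_le [IsProbabilityMeasure μ] (hlam : 0 ≤ lam) {g₁ g₂ : ℕ → ℝ} {c : ℝ}
    (hg : ∀ j, |g₁ j - g₂ j| ≤ c) (e : Fin n → ℝ) {k : ℕ} (hk : k < T) :
    |VoI T lam A Γ μ g₁ k e - VoI T lam A Γ μ g₂ k e| ≤ 2 * T * (lam * c) := by
  have hc : 0 ≤ c := (abs_nonneg _).trans (hg 0)
  have horizon : ((T - 1 - k : ℕ) : ℝ) + 1 ≤ T := by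
    have : T - 1 - k + 1 ≤ T := by omega
    exact_mod_cast this
  have hQ : ∀ a : ℝ, |a| ≤ 1 →
      |Qval T lam A Γ μ g₁ k e a - Qval T lam A Γ μ g₂ k e a| ≤ T * (lam * c) := fun a ha =>
    (abs_Qrev_sub_le hlam hg _ e ha).trans (by gcongr)
  have h0 := hQ 0 (by norm_num)
  have h1 := hQ 1 (by norm_num)
  unfold VoI
  rw [abs_le] at h0 h1 ⊢
  constructor <;> linarith

end ValueFunctions

lemma abs_extendSeq_sub_le {T : ℕ} (g₁ g₂ : Fin T → ℝ) (j : ℕ) :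
    |extendSeq T g₁ j - extendSeq T g₂ j| ≤ ‖g₁ - g₂‖ := by
  unfold extendSeq
  split_ifs with h
  · simpa only [Pi.sub_apply, Real.norm_eq_abs] using norm_le_pi_norm (g₁ - g₂) ⟨j, h⟩
  · simp

section MeanFieldOperator

variable {n T : ℕ} {lam α : ℝ} {A : Matrix (Fin n) (Fin n) ℝ} {Γ : ℕ → Matrix (Fin n) (Fin n) ℝ}
  {μ : Measure (Fin n → ℝ)} {ν : Fin T → Measure (Fin n → ℝ)}

lemma Tmf_mem_Icc [∀ k, IsProbabilityMeasure (ν k)] (g : Fin T → ℝ) (k : Fin T) :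
    Tmf T lam α A Γ μ ν g k ∈ Set.Icc 0 1 :=
  integral_mem_Icc_zero_one fun e => by
    rw [boltz_eq_sigmoid]
    exact ⟨Real.sigmoid_nonneg _, Real.sigmoid_le_one _⟩

lemma norm_Tmf_sub_le [IsProbabilityMeasure μ] [∀ k, IsProbabilityMeasure (ν k)] (hlam : 0 ≤ lam)
    (hα : 0 ≤ α) (g₁ g₂ : Fin T → ℝ) :
    ‖Tmf T lam α A Γ μ ν g₁ - Tmf T lam α A Γ μ ν g₂‖ ≤ 2 * α * lam * T * ‖g₁ - g₂‖ := by
  have hK : 0 ≤ 2 * α * lam * T * ‖g₁ - g₂‖ := by positivity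
  refine (pi_norm_le_iff_of_nonneg hK).2 fun k => ?_
  rw [Pi.sub_apply, Real.norm_eq_abs]
  refine abs_integral_sub_integral_le (by fun_prop) (by fun_prop) hK (ae_of_all _ fun e => ?_)
  calc _ ≤ α * (2 * T * (lam * ‖g₁ - g₂‖)) :=
        (abs_boltz_sub_le hα _ _).trans <| mul_le_mul_of_nonneg_left
          (abs_VoI_sub_le hlam (abs_extendSeq_sub_le g₁ g₂) e k.isLt) hα
    _ = 2 * α * lam * T * ‖g₁ - g₂‖ := by ring

end MeanFieldOperator

theorem mean_field_operator_contraction_and_unique_fixed_point_general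
    {n T : ℕ} (lam α : ℝ) (hlam : 0 < lam) (hα : 0 < α)
    (hcontr : 2 * α * lam * (T : ℝ) < 1)
    (A : Matrix (Fin n) (Fin n) ℝ) (Γ : ℕ → Matrix (Fin n) (Fin n) ℝ)
    (μ : Measure (Fin n → ℝ)) [IsProbabilityMeasure μ]
    (ν : Fin T → Measure (Fin n → ℝ)) [∀ k, IsProbabilityMeasure (ν k)] :
    (∀ g₁ g₂ : Fin T → ℝ,
        ‖Tmf T lam α A Γ μ ν g₁ - Tmf T lam α A Γ μ ν g₂‖ ≤
          2 * α * lam * (T : ℝ) * ‖g₁ - g₂‖) ∧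
      ∃! gs : Fin T → ℝ,
        (∀ k, gs k ∈ Set.Icc (0 : ℝ) 1) ∧ Tmf T lam α A Γ μ ν gs = gs := by
  have hlip := norm_Tmf_sub_le (A := A) (Γ := Γ) (μ := μ) (ν := ν) hlam.le hα.le
  have hK : 0 ≤ 2 * α * lam * (T : ℝ) := by positivity
  have hcontracting : ContractingWith ⟨_, hK⟩ (Tmf T lam α A Γ μ ν) :=
    ⟨hcontr, .of_dist_le_mul fun g₁ g₂ => by rw [dist_eq_norm, dist_eq_norm]; exact hlip g₁ g₂⟩
  have hfix := hcontracting.fixedPoint_isFixedPt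
  refine ⟨hlip, _, ⟨fun k => ?_, hfix⟩, fun gs hgs => hcontracting.fixedPoint_unique hgs.2⟩
  rw [← hfix]
  exact Tmf_mem_Icc _ k

/-- If `2αλT < 1` then the mean-field operator `𝒯` is a `2αλT`-contraction in the sup
norm on `ℝ^T`, and consequently it has a unique fixed point `g* ∈ [0,1]^T`. -/
theorem mean_field_operator_contraction_and_unique_fixed_point
    {n T : ℕ} (hT : 1 ≤ T) (lam α : ℝ) (hlam : 0 < lam) (hα : 0 < α)
    (hcontr : 2 * α * lam * (T : ℝ) < 1)
    (A : Matrix (Fin n) (Fin n) ℝ) (Γ : ℕ → Matrix (Fin n) (Fin n) ℝ)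
    (hΓ : ∀ k, (Γ k).PosSemidef)
    (μ : Measure (Fin n → ℝ)) [IsProbabilityMeasure μ]
    (hmom : Integrable (fun w => ‖w‖ ^ 2) μ)
    (ν : Fin T → Measure (Fin n → ℝ)) [∀ k, IsProbabilityMeasure (ν k)] :
    (∀ g₁ g₂ : Fin T → ℝ,
        ‖Tmf T lam α A Γ μ ν g₁ - Tmf T lam α A Γ μ ν g₂‖ ≤
          2 * α * lam * (T : ℝ) * ‖g₁ - g₂‖) ∧
      ∃! gs : Fin T → ℝ,
        (∀ k, gs k ∈ Set.Icc (0 : ℝ) 1) ∧ Tmf T lam α A Γ μ ν gs = gs :=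
  mean_field_operator_contraction_and_unique_fixed_point_general lam α hlam hα hcontr A Γ μ ν
end

section
/- With the setup below, the time-averaged expected deviation of the empirical channel utilization from the mean-field trajectory satisfies (1/T) Σ_{k=0}^{T−1} E[ | (1/N) Σ_{j=1}^N γ^j_k − g*_k | ] ≤ 2/N + 1/√N + Σ_{ω ∈ Ω} | P_N(ω) − P(ω) |. -/
/-!
Fix a time step and write `c j = g^{ω_j}`. The deviation splits as
`(γ^i − c_i)/N + (1/N) Σ_{j ≠ i} (γ^j − E γ^j) + ((1/N) Σ_j c_j − Σ_θ P(θ) g^θ)`.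
The deviating team contributes at most `1/N`. The centred sum of the other teams has
`E|·| ≤ √Var ≤ √N / 2`, since variances of independent variables add and a `[0,1]`-valued
variable has variance at most `1/4` (Popoviciu). The last term equals
`Σ_θ (P_N(θ) − P(θ)) g^θ`, bounded by `Σ_θ |P_N(θ) − P(θ)|` because `g^θ ∈ [0,1]`.
-/

open MeasureTheory ProbabilityTheory

lemma abs_empirical_mean_sub_le {ι Θ : Type*} [Fintype ι] [Fintype Θ] [DecidableEq Θ]
    (ω : ι → Θ) (P f : Θ → ℝ) (hf : ∀ θ, |f θ| ≤ 1) :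
    |(1 / Fintype.card ι : ℝ) * ∑ j, f (ω j) - ∑ θ, P θ * f θ| ≤
      ∑ θ, |((Finset.univ.filter fun j ↦ ω j = θ).card : ℝ) / Fintype.card ι - P θ| := by
  have hfiber : ∑ j, f (ω j) = ∑ θ, ((Finset.univ.filter fun j ↦ ω j = θ).card : ℝ) * f θ := by
    rw [← Finset.sum_fiberwise Finset.univ ω]
    refine Finset.sum_congr rfl fun θ _ ↦ ?_
    rw [Finset.sum_congr rfl fun j hj ↦ by rw [(Finset.mem_filter.mp hj).2], Finset.sum_const,
      nsmul_eq_mul]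
  rw [hfiber, Finset.mul_sum, ← Finset.sum_sub_distrib]
  refine (Finset.abs_sum_le_sum_abs _ _).trans (Finset.sum_le_sum fun θ _ ↦ ?_)
  calc |1 / Fintype.card ι * ((Finset.univ.filter fun j ↦ ω j = θ).card * f θ) - P θ * f θ|
      = |((Finset.univ.filter fun j ↦ ω j = θ).card : ℝ) / Fintype.card ι - P θ| * |f θ| := by
        rw [← abs_mul]; ring_nf
    _ ≤ _ := mul_le_of_le_one_right (abs_nonneg _) (hf θ)

section

variable {Ω : Type*} [MeasurableSpace Ω] {μ : Measure Ω} [IsProbabilityMeasure μ]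

lemma integral_abs_sub_integral_le_sqrt_variance {X : Ω → ℝ} (hX : MemLp X 2 μ) :
    ∫ ω, |X ω - μ[X]| ∂μ ≤ √(Var[X; μ]) := by
  have hY : MemLp (fun ω ↦ |X ω - μ[X]|) 2 μ := (hX.sub (memLp_const _)).abs
  have hY_sq : μ[(fun ω ↦ |X ω - μ[X]|) ^ 2] = Var[X; μ] := by
    simp [variance_eq_integral hX.aemeasurable]
  refine Real.le_sqrt_of_sq_le ?_
  -- Jensen for `t ↦ t ^ 2`, in the form `0 ≤ Var |X - E X|`.
  have hvar_nonneg := variance_nonneg (fun ω ↦ |X ω - μ[X]|) μ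
  rw [variance_eq_sub hY, hY_sq] at hvar_nonneg
  linarith

lemma integral_abs_sum_sub_sum_integral_le_sqrt_card {ι : Type*} [Fintype ι] {X : ι → Ω → ℝ}
    (hmeas : ∀ j, Measurable (X j)) (hX : ∀ j ω, X j ω ∈ Set.Icc (0 : ℝ) 1)
    (hindep : iIndepFun X μ) :
    ∫ ω, |∑ j, X j ω - ∑ j, μ[X j]| ∂μ ≤ √(Fintype.card ι) / 2 := by
  have hL2 : ∀ j, MemLp (X j) 2 μ := fun j ↦
    memLp_of_bounded (.of_forall (hX j)) (hmeas j).aestronglyMeasurable 2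
  have hvar : Var[∑ j, X j; μ] ≤ Fintype.card ι / 4 := by
    rw [IndepFun.variance_sum (fun j _ ↦ hL2 j) fun j _ k _ hjk ↦ hindep.indepFun hjk]
    calc ∑ j, Var[X j; μ] ≤ ∑ _j : ι, ((1 - 0) / 2 : ℝ) ^ 2 :=
          Finset.sum_le_sum fun j _ ↦
            variance_le_sq_of_bounded (.of_forall (hX j)) (hmeas j).aemeasurable
      _ = Fintype.card ι / 4 := by
          simp only [Finset.sum_const, Finset.card_univ, nsmul_eq_mul]
          ring
  calc ∫ ω, |∑ j, X j ω - ∑ j, μ[X j]| ∂μ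
      = ∫ ω, |(∑ j, X j) ω - μ[∑ j, X j]| ∂μ := by
        simp only [Finset.sum_apply]
        rw [integral_finsetSum _ fun j _ ↦ (hL2 j).integrable one_le_two]
    _ ≤ √(Var[∑ j, X j; μ]) :=
        integral_abs_sub_integral_le_sqrt_variance (memLp_finsetSum' _ fun j _ ↦ hL2 j)
    _ ≤ √(Fintype.card ι / 4) := Real.sqrt_le_sqrt hvar
    _ = √(Fintype.card ι) / 2 := by
        rw [Real.sqrt_div' _ (by norm_num : (0 : ℝ) ≤ 4)]
        norm_num

lemma integral_abs_sum_sub_le_of_iIndepFun_ne {ι : Type*} [Fintype ι] [DecidableEq ι]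
    {X : ι → Ω → ℝ} {c : ι → ℝ} (i : ι)
    (hmeas : ∀ j, Measurable (X j)) (hX : ∀ j ω, X j ω ∈ Set.Icc (0 : ℝ) 1)
    (hci : c i ∈ Set.Icc (0 : ℝ) 1) (hindep : iIndepFun (fun j : {j // j ≠ i} ↦ X j) μ)
    (hmean : ∀ j, j ≠ i → μ[X j] = c j) :
    ∫ ω, |∑ j, X j ω - ∑ j, c j| ∂μ ≤ 1 + √(Fintype.card ι) / 2 := by
  set Y : Ω → ℝ := fun ω ↦ ∑ j : {j // j ≠ i}, X j ω - ∑ j : {j // j ≠ i}, μ[X j]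
  have hY : Integrable Y μ := by
    refine (integrable_finsetSum _ fun j _ ↦ ?_).sub (integrable_const _)
    exact .of_mem_Icc 0 1 (hmeas j).aemeasurable (.of_forall (hX j))
  have hsplit : ∀ ω, |∑ j, X j ω - ∑ j, c j| ≤ 1 + |Y ω| := by
    intro ω
    have hi : |X i ω - c i| ≤ 1 := by
      rw [abs_le]; constructor <;> linarith [(hX i ω).1, (hX i ω).2, hci.1, hci.2]
    have hdecomp : ∑ j, X j ω - ∑ j, c j = (X i ω - c i) + Y ω := by
      have hc : ∑ j : {j // j ≠ i}, c j = ∑ j : {j // j ≠ i}, μ[X j] :=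
        Finset.sum_congr rfl fun j _ ↦ (hmean j j.2).symm
      simp only [Y, Fintype.sum_eq_add_sum_subtype_ne _ i, hc]
      ring
    rw [hdecomp]
    exact (abs_add_le _ _).trans (by linarith)
  calc ∫ ω, |∑ j, X j ω - ∑ j, c j| ∂μ ≤ ∫ ω, (1 + |Y ω|) ∂μ :=
        integral_mono_of_nonneg (.of_forall fun _ ↦ abs_nonneg _)
          ((integrable_const 1).add hY.abs) (.of_forall hsplit)
    _ = 1 + ∫ ω, |Y ω| ∂μ := by rw [integral_add (integrable_const 1) hY.abs]; simp
    _ ≤ 1 + √(Fintype.card {j // j ≠ i}) / 2 := by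
        gcongr
        exact integral_abs_sum_sub_sum_integral_le_sqrt_card (hmeas ·) (hX ·) hindep
    _ ≤ 1 + √(Fintype.card ι) / 2 := by
        gcongr
        exact Fintype.card_subtype_le _

lemma integral_abs_average_sub_mixture_le {ι Θ : Type*} [Fintype ι] [DecidableEq ι] [Fintype Θ]
    [DecidableEq Θ] {X : ι → Ω → ℝ} (ω : ι → Θ) (P f : Θ → ℝ)
    (hf : ∀ θ, f θ ∈ Set.Icc (0 : ℝ) 1) (i : ι)
    (hmeas : ∀ j, Measurable (X j)) (hX : ∀ j x, X j x ∈ Set.Icc (0 : ℝ) 1)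
    (hindep : iIndepFun (fun j : {j // j ≠ i} ↦ X j) μ)
    (hmean : ∀ j, j ≠ i → μ[X j] = f (ω j)) :
    ∫ x, |(1 / Fintype.card ι : ℝ) * ∑ j, X j x - ∑ θ, P θ * f θ| ∂μ ≤
      1 / Fintype.card ι + 1 / (2 * √(Fintype.card ι)) +
        ∑ θ, |((Finset.univ.filter fun j ↦ ω j = θ).card : ℝ) / Fintype.card ι - P θ| := by
  set n : ℝ := (Fintype.card ι : ℝ)
  have hn : 0 < n := Nat.cast_pos.mpr (Fintype.card_pos_iff.mpr ⟨i⟩)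
  set Z : Ω → ℝ := fun x ↦ ∑ j, X j x - ∑ j, f (ω j)
  set D : ℝ := 1 / n * ∑ j, f (ω j) - ∑ θ, P θ * f θ
  have hZ : Integrable Z μ :=
    (integrable_finsetSum _ fun j _ ↦ .of_mem_Icc 0 1 (hmeas j).aemeasurable
      (.of_forall (hX j))).sub (integrable_const _)
  have hpt : ∀ x, |1 / n * ∑ j, X j x - ∑ θ, P θ * f θ| ≤ 1 / n * |Z x| + |D| := by
    intro x
    calc |1 / n * ∑ j, X j x - ∑ θ, P θ * f θ| = |1 / n * Z x + D| := by
          congr 1; simp only [Z, D]; ring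
      _ ≤ |1 / n * Z x| + |D| := abs_add_le _ _
      _ = 1 / n * |Z x| + |D| := by rw [abs_mul, abs_of_pos (by positivity)]
  calc ∫ x, |1 / n * ∑ j, X j x - ∑ θ, P θ * f θ| ∂μ ≤ ∫ x, (1 / n * |Z x| + |D|) ∂μ :=
        integral_mono_of_nonneg (.of_forall fun _ ↦ abs_nonneg _)
          ((hZ.abs.const_mul _).add (integrable_const _)) (.of_forall hpt)
    _ = 1 / n * ∫ x, |Z x| ∂μ + |D| := by
        rw [integral_add (hZ.abs.const_mul _) (integrable_const _), integral_const_mul]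
        simp
    _ ≤ 1 / n * (1 + √n / 2) +
          ∑ θ, |((Finset.univ.filter fun j ↦ ω j = θ).card : ℝ) / n - P θ| := by
        gcongr
        · exact integral_abs_sum_sub_le_of_iIndepFun_ne i hmeas hX (hf (ω i)) hindep hmean
        · exact abs_empirical_mean_sub_le ω P f fun θ ↦
            abs_le.mpr ⟨by linarith [(hf θ).1], (hf θ).2⟩
    _ = _ := by
        have hsqrt : √n * √n = n := Real.mul_self_sqrt hn.le
        field_simp
        linear_combination hsqrt

end

theorem mean_field_empirical_deviation_bound_general
    {Ω' : Type*} [MeasurableSpace Ω'] (P' : Measure Ω') [IsProbabilityMeasure P']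
    {Θ : Type*} [Fintype Θ] [DecidableEq Θ]
    (N T : ℕ) (hT : 1 ≤ T)
    (ω : Fin N → Θ)
    (P : Θ → ℝ)
    (g : Θ → Fin T → ℝ) (hg : ∀ θ k, g θ k ∈ Set.Icc (0 : ℝ) 1)
    (i : Fin N)
    (γ : Fin N → Fin T → Ω' → ℝ)
    (hmeas : ∀ j k, Measurable (γ j k))
    (hval : ∀ j k x, γ j k x = 0 ∨ γ j k x = 1)
    (hindep : ∀ k : Fin T,
      ProbabilityTheory.iIndepFun
        (fun j : {j : Fin N // j ≠ i} => γ j k) P')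
    (hmeanγ : ∀ j : Fin N, j ≠ i → ∀ k : Fin T, (∫ x, γ j k x ∂P') = g (ω j) k) :
    (1 / T : ℝ) *
        ∑ k : Fin T,
          ∫ x, |(1 / N : ℝ) * ∑ j : Fin N, γ j k x - ∑ θ, P θ * g θ k| ∂P' ≤
      2 / N + 1 / Real.sqrt N +
        ∑ θ, |((Finset.univ.filter fun j : Fin N => ω j = θ).card : ℝ) / N - P θ| := by
  set B := 2 / N + 1 / Real.sqrt N +
    ∑ θ, |((Finset.univ.filter fun j : Fin N => ω j = θ).card : ℝ) / N - P θ| with hB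
  have hγ : ∀ j k x, γ j k x ∈ Set.Icc (0 : ℝ) 1 := fun j k x ↦ by
    rcases hval j k x with h | h <;> simp [h]
  have hstep : ∀ k, ∫ x, |(1 / N : ℝ) * ∑ j, γ j k x - ∑ θ, P θ * g θ k| ∂P' ≤ B := by
    intro k
    have hN : (0 : ℝ) < N := Nat.cast_pos.mpr (Fin.pos i)
    have := integral_abs_average_sub_mixture_le (μ := P') ω P (g · k) (hg · k) i
      (hmeas · k) (hγ · k) (hindep k) (hmeanγ · · k)
    simp only [Fintype.card_fin] at this
    refine this.trans (le_of_le_of_eq ?_ hB.symm)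
    gcongr
    · linarith
    · linarith [Real.sqrt_pos.mpr hN]
  have hTpos : (0 : ℝ) < T := Nat.cast_pos.mpr hT
  calc (1 / T : ℝ) * ∑ k, ∫ x, |(1 / N : ℝ) * ∑ j, γ j k x - ∑ θ, P θ * g θ k| ∂P'
      ≤ 1 / T * (T • B) := by
        gcongr
        simpa using Finset.sum_le_card_nsmul Finset.univ _ B fun k _ ↦ hstep k
    _ = B := by rw [nsmul_eq_mul]; field_simp

/-- Time-averaged expected deviation of the empirical channel utilization from the
mean-field trajectory: with team types `ω_j ∈ Θ` having empirical distribution `P_N`,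
limit type distribution `P`, per-type mean-field trajectories `g^θ ∈ [0,1]^T`,
mean-field trajectory `g*_k = Σ_θ P(θ) g^θ_k`, a deviating team `i`, and `{0,1}`-valued
transmission variables `γ^j_k` that (for `j ≠ i`) are mutually independent at each
time `k` with `E[γ^j_k] = g^{ω_j}_k`, we have
`(1/T) Σ_k E[|(1/N) Σ_j γ^j_k − g*_k|] ≤ 2/N + 1/√N + Σ_θ |P_N(θ) − P(θ)|`. -/
theorem mean_field_empirical_deviation_bound
    {Ω' : Type*} [MeasurableSpace Ω'] (P' : Measure Ω') [IsProbabilityMeasure P']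
    {Θ : Type*} [Fintype Θ] [DecidableEq Θ]
    (N T : ℕ) (hN : 1 ≤ N) (hT : 1 ≤ T)
    (ω : Fin N → Θ)
    (P : Θ → ℝ) (hP0 : ∀ θ, 0 ≤ P θ) (hP1 : ∑ θ, P θ = 1)
    (g : Θ → Fin T → ℝ) (hg : ∀ θ k, g θ k ∈ Set.Icc (0 : ℝ) 1)
    (i : Fin N)
    (γ : Fin N → Fin T → Ω' → ℝ)
    (hmeas : ∀ j k, Measurable (γ j k))
    (hval : ∀ j k x, γ j k x = 0 ∨ γ j k x = 1)
    (hindep : ∀ k : Fin T,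
      ProbabilityTheory.iIndepFun
        (fun j : {j : Fin N // j ≠ i} => γ j k) P')
    (hmeanγ : ∀ j : Fin N, j ≠ i → ∀ k : Fin T, (∫ x, γ j k x ∂P') = g (ω j) k) :
    (1 / T : ℝ) *
        ∑ k : Fin T,
          ∫ x, |(1 / N : ℝ) * ∑ j : Fin N, γ j k x - ∑ θ, P θ * g θ k| ∂P' ≤
      2 / N + 1 / Real.sqrt N +
        ∑ θ, |((Finset.univ.filter fun j : Fin N => ω j = θ).card : ℝ) / N - P θ| :=
  mean_field_empirical_deviation_bound_general P' N T hT ω P g hg i γ hmeas hval hindep hmeanγ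
end
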